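/- arXiv:2604.23607 — 2 statements merged into one kernel-verified Lean document; each statement's English description precedes it below -/
import Mathlib

section
/- Let d ≥ 2 and let W be a σ_d-invariant web, i.e., a family of chords such that: (a) every non-critical chord of W belongs to a full sibling collection contained in W, (b) W contains all points of the circle as degenerate chords, (c) W is closed under taking σ_d-images, and (d) every chord of W has a σ_d-preimage in W. Then the closure of W (in the Hausdorff metric on chords) is again a σ_d-invariant web. -/
/-!
Degenerate chords and σ_d-images pass to the closure by continuity of σ_d, and preimage chords
and sibling collections of a limit chord are limits of those of approximating chords, by
compactness. The delicate point is that disjointness is not a closed condition. It survives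
because the siblings of a chord close to a non-critical chord `ℓ` have their endpoints mapped
close to the two distinct endpoints of `σ_d(ℓ)`, while σ_d is injective on arcs shorter than
`1/d`; so two sibling endpoints cannot merge in the limit.
-/

noncomputable section

/-- The circle `ℝ/ℤ`. -/
abbrev S1 := AddCircle (1 : ℝ)

/-- The `d`-tupling map `σ_d(t) = d·t` on the circle. -/
def sig (d : ℕ) (x : S1) : S1 := d • x

/-- `StrictArc a b c` : `b` lies strictly inside the positively oriented open arc from `a` to `c`. -/
def StrictArc (a b c : S1) : Prop :=
  ∃ x y z : ℝ, (x : S1) = a ∧ (y : S1) = b ∧ (z : S1) = c ∧ x < y ∧ y < z ∧ z < x + 1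

/-- Two chords (given by ordered pairs of endpoints) are linked (cross): their endpoints
alternate on the circle. -/
def Linked (p q : S1 × S1) : Prop :=
  (StrictArc p.1 q.1 p.2 ∧ StrictArc p.2 q.2 p.1) ∨ (StrictArc p.1 q.2 p.2 ∧ StrictArc p.2 q.1 p.1)

/-- Two chords are disjoint: they share no endpoint and are not linked. -/
def ChordDisj (p q : S1 × S1) : Prop :=
  p.1 ≠ q.1 ∧ p.1 ≠ q.2 ∧ p.2 ≠ q.1 ∧ p.2 ≠ q.2 ∧ ¬ Linked p q

/-- The σ_d-image of a chord, as the (unordered) set of images of the endpoints. -/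
def chordIm (d : ℕ) (p : S1 × S1) : Set S1 := {sig d p.1, sig d p.2}
/-- A full sibling collection: `d` pairwise disjoint chords with a common σ_d-image. -/
def SiblingCollection (d : ℕ) (f : Fin d → S1 × S1) : Prop :=
  (∀ i j, i ≠ j → ChordDisj (f i) (f j)) ∧ ∀ i j, chordIm d (f i) = chordIm d (f j)

/-- A family of chords has the sibling property: every non-critical chord of the family
is a member of a full sibling collection contained in the family. -/
def HasSiblings (d : ℕ) (W : Set (S1 × S1)) : Prop :=
  ∀ p ∈ W, sig d p.1 ≠ sig d p.2 →
    ∃ f : Fin d → S1 × S1, (∀ i, f i ∈ W) ∧ (∃ i, f i = p) ∧ SiblingCollection d f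

/-- A σ_d-invariant web: a family of chords with the sibling property, containing all
degenerate chords, closed under σ_d-images, and with every chord having a preimage chord. -/
def IsInvWeb (d : ℕ) (W : Set (S1 × S1)) : Prop :=
  HasSiblings d W ∧
  (∀ x : S1, (x, x) ∈ W) ∧
  (∀ p ∈ W, (sig d p.1, sig d p.2) ∈ W) ∧
  (∀ p ∈ W, ∃ q ∈ W, ({sig d q.1, sig d q.2} : Set S1) = {p.1, p.2})

open Filter Topology

@[fun_prop]
lemma continuous_sig (d : ℕ) : Continuous (sig d) := continuous_nsmul d

lemma eq_of_sig_eq_of_dist_lt {d : ℕ} {x y : S1} (hxy : dist x y < 1 / d)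
    (h : sig d x = sig d y) : x = y := by
  by_contra hne
  have hd : d ≠ 0 := by
    rintro rfl
    rw [Nat.cast_zero, div_zero] at hxy
    exact dist_nonneg.not_gt hxy
  have hu : d • (x - y) = 0 := by simpa [sig, smul_sub, sub_eq_zero] using h
  have hfin : IsOfFinAddOrder (x - y) :=
    isOfFinAddOrder_iff_nsmul_eq_zero.2 ⟨d, Nat.pos_of_ne_zero hd, hu⟩
  have hord : (addOrderOf (x - y) : ℝ) ≤ d :=
    Nat.cast_le.2 (Nat.le_of_dvd (Nat.pos_of_ne_zero hd) (addOrderOf_dvd_of_nsmul_eq_zero hu))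
  have hlow := AddCircle.le_add_order_smul_norm_of_isOfFinAddOrder hfin (sub_ne_zero.2 hne)
  rw [nsmul_eq_mul, ← dist_eq_norm] at hlow
  rw [lt_div_iff₀ (by positivity)] at hxy
  nlinarith [dist_nonneg (x := x) (y := y)]

lemma eventually_eq_of_sig_eq {ι : Type*} {l : Filter ι} {d : ℕ} (hd : d ≠ 0)
    {x y : ι → S1} {z : S1} (hx : Tendsto x l (𝓝 z)) (hy : Tendsto y l (𝓝 z))
    (h : ∀ᶠ n in l, sig d (x n) = sig d (y n)) : ∀ᶠ n in l, x n = y n := by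
  have hε : 0 < 1 / (d : ℝ) / 2 := by positivity
  filter_upwards [h, Metric.tendsto_nhds.1 hx _ hε, Metric.tendsto_nhds.1 hy _ hε]
    with n hsig hxn hyn
  refine eq_of_sig_eq_of_dist_lt ?_ hsig
  linarith [dist_triangle_right (x n) (y n) z, add_halves (1 / (d : ℝ))]

lemma eventually_eq_of_mem_pair {ι X : Type*} [TopologicalSpace X] [T2Space X]
    {l : Filter ι} {x y A B : ι → X} {z a b : X} (hx : Tendsto x l (𝓝 z))
    (hy : Tendsto y l (𝓝 z)) (hA : Tendsto A l (𝓝 a)) (hB : Tendsto B l (𝓝 b)) (hab : a ≠ b)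
    (hxAB : ∀ n, x n ∈ ({A n, B n} : Set X)) (hyAB : ∀ n, y n ∈ ({A n, B n} : Set X)) :
    ∀ᶠ n in l, x n = y n := by
  have eventually_ne {f g : ι → X} {u v : X} (hf : Tendsto f l (𝓝 u))
      (hg : Tendsto g l (𝓝 v)) (huv : u ≠ v) : ∀ᶠ n in l, f n ≠ g n :=
    (hf.prodMk_nhds hg).eventually ((isOpen_ne_fun continuous_fst continuous_snd).mem_nhds huv)
  by_cases hzb : z = b
  · subst hzb
    filter_upwards [eventually_ne hx hA hab.symm, eventually_ne hy hA hab.symm] with n hxn hyn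
    rw [(hxAB n).resolve_left hxn, (hyAB n).resolve_left hyn]
  · filter_upwards [eventually_ne hx hB hzb, eventually_ne hy hB hzb] with n hxn hyn
    rw [(hxAB n).resolve_right hxn, (hyAB n).resolve_right hyn]

lemma exists_lift_abs_sub_eq_dist (x : ℝ) (u : S1) :
    ∃ x' : ℝ, (x' : S1) = u ∧ |x - x'| = dist (x : S1) u := by
  obtain ⟨y, rfl⟩ := QuotientAddGroup.mk_surjective u
  refine ⟨y + round (x - y), ?_, ?_⟩
  · rw [AddCircle.coe_add, add_eq_left, AddCircle.coe_eq_zero_iff]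
    exact ⟨round (x - y), by simp⟩
  · rw [dist_eq_norm, ← AddCircle.coe_sub, AddCircle.norm_eq]
    simp only [one_mul, inv_one, mul_one]
    ring_nf

lemma isOpen_strictArc : IsOpen {t : S1 × S1 × S1 | StrictArc t.1 t.2.1 t.2.2} := by
  rw [Metric.isOpen_iff]
  rintro ⟨a, b, c⟩ ⟨x, y, z, rfl, rfl, rfl, hxy, hyz, hzx⟩
  set ε := min (min ((y - x) / 2) ((z - y) / 2)) ((x + 1 - z) / 2)
  have hε : ε ≤ (y - x) / 2 ∧ ε ≤ (z - y) / 2 ∧ ε ≤ (x + 1 - z) / 2 :=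
    ⟨(min_le_left _ _).trans (min_le_left _ _), (min_le_left _ _).trans (min_le_right _ _),
      min_le_right _ _⟩
  refine ⟨ε, by positivity, ?_⟩
  rintro ⟨a', b', c'⟩ hmem
  simp only [Metric.mem_ball, Prod.dist_eq, max_lt_iff] at hmem
  obtain ⟨ha, hb, hc⟩ := hmem
  obtain ⟨x', rfl, hx'⟩ := exists_lift_abs_sub_eq_dist x a'
  obtain ⟨y', rfl, hy'⟩ := exists_lift_abs_sub_eq_dist y b'
  obtain ⟨z', rfl, hz'⟩ := exists_lift_abs_sub_eq_dist z c'
  rw [dist_comm, ← hx', abs_lt] at ha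
  rw [dist_comm, ← hy', abs_lt] at hb
  rw [dist_comm, ← hz', abs_lt] at hc
  exact ⟨x', y', z', rfl, rfl, rfl, by linarith, by linarith, by linarith⟩

lemma isOpen_linked : IsOpen {pq : (S1 × S1) × (S1 × S1) | Linked pq.1 pq.2} := by
  have arc (f : (S1 × S1) × (S1 × S1) → S1 × S1 × S1) (hf : Continuous f) :
      IsOpen {pq | StrictArc (f pq).1 (f pq).2.1 (f pq).2.2} :=
    isOpen_strictArc.preimage hf
  exact ((arc (fun pq => (pq.1.1, pq.2.1, pq.1.2)) (by fun_prop)).inter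
    (arc (fun pq => (pq.1.2, pq.2.2, pq.1.1)) (by fun_prop))).union
    ((arc (fun pq => (pq.1.1, pq.2.2, pq.1.2)) (by fun_prop)).inter
    (arc (fun pq => (pq.1.2, pq.2.1, pq.1.1)) (by fun_prop)))

lemma isClosed_pair_eq {X Y : Type*} [TopologicalSpace X] [TopologicalSpace Y] [T2Space Y]
    {f g h k : X → Y} (hf : Continuous f) (hg : Continuous g) (hh : Continuous h)
    (hk : Continuous k) : IsClosed {x | ({f x, g x} : Set Y) = {h x, k x}} := by
  simp only [Set.pair_eq_pair_iff, Set.ofPred_or, Set.ofPred_and]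
  exact ((isClosed_eq hf hh).inter (isClosed_eq hg hk)).union
    ((isClosed_eq hf hk).inter (isClosed_eq hg hh))

lemma sig_ne_of_chordIm_eq {d : ℕ} {p q : S1 × S1} (h : chordIm d p = chordIm d q)
    (hq : sig d q.1 ≠ sig d q.2) : sig d p.1 ≠ sig d p.2 := by
  intro hp
  rw [chordIm, chordIm, hp, Set.pair_eq_singleton, eq_comm, Set.eq_singleton_iff_unique_mem] at h
  exact hq ((h.2 _ (Set.mem_insert _ _)).trans (h.2 _ (Set.mem_insert_of_mem _ rfl)).symm)

lemma chordDisj_of_tendsto {d : ℕ} {c c' : ℕ → S1 × S1} {q q' : S1 × S1}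
    (hc : Tendsto c atTop (𝓝 q)) (hc' : Tendsto c' atTop (𝓝 q'))
    (him : ∀ n, chordIm d (c' n) = chordIm d (c n)) (hdisj : ∀ n, ChordDisj (c n) (c' n))
    (hq : sig d q.1 ≠ sig d q.2) : ChordDisj q q' := by
  have hd : d ≠ 0 := by rintro rfl; simp [sig] at hq
  have hA : Tendsto (fun n => sig d (c n).1) atTop (𝓝 (sig d q.1)) :=
    ((continuous_sig d).comp continuous_fst).continuousAt.tendsto.comp hc
  have hB : Tendsto (fun n => sig d (c n).2) atTop (𝓝 (sig d q.2)) :=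
    ((continuous_sig d).comp continuous_snd).continuousAt.tendsto.comp hc
  have mem₁ (n) : sig d (c n).1 ∈ chordIm d (c n) := Set.mem_insert _ _
  have mem₂ (n) : sig d (c n).2 ∈ chordIm d (c n) := Set.mem_insert_of_mem _ rfl
  have mem₁' (n) : sig d (c' n).1 ∈ chordIm d (c n) := him n ▸ Set.mem_insert _ _
  have mem₂' (n) : sig d (c' n).2 ∈ chordIm d (c n) := him n ▸ Set.mem_insert_of_mem _ rfl
  have separate {x y : ℕ → S1} {z : S1} (hx : Tendsto x atTop (𝓝 z))
      (hy : Tendsto y atTop (𝓝 z)) (hxc : ∀ n, sig d (x n) ∈ chordIm d (c n))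
      (hyc : ∀ n, sig d (y n) ∈ chordIm d (c n)) (hxy : ∀ n, x n ≠ y n) : False := by
    have hsig := eventually_eq_of_mem_pair ((continuous_sig d).continuousAt.tendsto.comp hx)
      ((continuous_sig d).continuousAt.tendsto.comp hy) hA hB hq hxc hyc
    obtain ⟨n, hn⟩ := (eventually_eq_of_sig_eq hd hx hy hsig).exists
    exact hxy n hn
  have h₁ := (continuous_fst.tendsto q).comp hc
  have h₂ := (continuous_snd.tendsto q).comp hc
  have h₁' := (continuous_fst.tendsto q').comp hc'
  have h₂' := (continuous_snd.tendsto q').comp hc'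
  refine ⟨fun h => ?_, fun h => ?_, fun h => ?_, fun h => ?_, ?_⟩
  · exact separate h₁ (h ▸ h₁') mem₁ mem₁' fun n => (hdisj n).1
  · exact separate h₁ (h ▸ h₂') mem₁ mem₂' fun n => (hdisj n).2.1
  · exact separate h₂ (h ▸ h₁') mem₂ mem₁' fun n => (hdisj n).2.2.1
  · exact separate h₂ (h ▸ h₂') mem₂ mem₂' fun n => (hdisj n).2.2.2.1
  · exact isOpen_linked.isClosed_compl.mem_of_tendsto (hc.prodMk_nhds hc')
      (Eventually.of_forall fun n => (hdisj n).2.2.2.2)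

lemma isClosed_siblingCollection_through {d : ℕ} {V : Set (S1 × S1)} (hV : IsClosed V)
    (hVnc : ∀ q ∈ V, sig d q.1 ≠ sig d q.2) :
    IsClosed {fq : (Fin d → S1 × S1) × (S1 × S1) |
      fq.2 ∈ V ∧ (∃ i, fq.1 i = fq.2) ∧ SiblingCollection d fq.1} := by
  refine isClosed_of_closure_subset fun fq hfq => ?_
  obtain ⟨s, hs, hlim⟩ := mem_closure_iff_seq_limit.1 hfq
  have hf (i : Fin d) : Tendsto (fun n => (s n).1 i) atTop (𝓝 (fq.1 i)) :=
    ((continuous_apply i).comp continuous_fst).continuousAt.tendsto.comp hlim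
  have hqV : fq.2 ∈ V := hV.mem_of_tendsto ((continuous_snd.tendsto _).comp hlim)
    (Eventually.of_forall fun n => (hs n).1)
  obtain ⟨i₀, hi₀⟩ := Set.mem_iUnion.1 <| (isClosed_iUnion_of_finite fun i =>
    isClosed_eq (f := fun fq : (Fin d → S1 × S1) × (S1 × S1) => fq.1 i) (by fun_prop)
      continuous_snd).mem_of_tendsto hlim
    (Eventually.of_forall fun n => Set.mem_iUnion.2 (hs n).2.1)
  have him (i j : Fin d) : chordIm d (fq.1 i) = chordIm d (fq.1 j) :=
    (isClosed_pair_eq (f := fun f : Fin d → S1 × S1 => sig d (f i).1)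
      (g := fun f => sig d (f i).2) (h := fun f => sig d (f j).1) (k := fun f => sig d (f j).2)
      (by fun_prop) (by fun_prop) (by fun_prop) (by fun_prop)).mem_of_tendsto
      ((continuous_fst.tendsto _).comp hlim) (Eventually.of_forall fun n => (hs n).2.2.2 i j)
  refine ⟨hqV, ⟨i₀, hi₀⟩, fun i j hij => ?_, him⟩
  exact chordDisj_of_tendsto (hf i) (hf j) (fun n => (hs n).2.2.2 j i)
    (fun n => (hs n).2.2.1 i j hij) (sig_ne_of_chordIm_eq (him i i₀) (hi₀ ▸ hVnc _ hqV))

lemma exists_mem_closure_of_forall_exists {X Y : Type*} [TopologicalSpace X] [CompactSpace X]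
    [TopologicalSpace Y] {R : Set (X × Y)} (hR : IsClosed R) {s : Set X} {t : Set Y}
    (h : ∀ y ∈ t, ∃ x ∈ s, (x, y) ∈ R) {y : Y} (hy : y ∈ closure t) :
    ∃ x ∈ closure s, (x, y) ∈ R := by
  have hclosed : IsClosed (Prod.snd '' (R ∩ closure s ×ˢ Set.univ)) :=
    isClosedMap_snd_of_compactSpace _ (hR.inter (isClosed_closure.prod isClosed_univ))
  have ht : t ⊆ Prod.snd '' (R ∩ closure s ×ˢ Set.univ) := fun y hy =>
    let ⟨x, hx, hxy⟩ := h y hy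
    ⟨(x, y), ⟨hxy, subset_closure hx, trivial⟩, rfl⟩
  obtain ⟨⟨x, _⟩, ⟨hxy, hx, -⟩, rfl⟩ := hclosed.closure_subset_iff.2 ht hy
  exact ⟨x, hx, hxy⟩

lemma hasSiblings_closure {d : ℕ} {W : Set (S1 × S1)} (hW : HasSiblings d W) :
    HasSiblings d (closure W) := by
  intro p hp hne
  obtain ⟨V, hVp, hV, hVnc⟩ := exists_mem_nhds_isClosed_subset
    ((isOpen_ne_fun (f := fun q : S1 × S1 => sig d q.1) (g := fun q => sig d q.2) (by fun_prop)
      (by fun_prop)).mem_nhds hne)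
  have hpV : p ∈ closure (V ∩ W) := by
    rw [mem_closure_iff_nhds] at hp ⊢
    intro U hU
    simpa only [Set.inter_assoc] using hp _ (inter_mem hU hVp)
  obtain ⟨f, hf, -, hfp, hsib⟩ := exists_mem_closure_of_forall_exists
    (isClosed_siblingCollection_through hV hVnc) (s := Set.univ.pi fun _ => W)
    (fun q hq => let ⟨f, hfW, hfq, hsib⟩ := hW q hq.2 (hVnc hq.1)
      ⟨f, fun i _ => hfW i, hq.1, hfq, hsib⟩) hpV
  rw [closure_pi_set] at hf
  exact ⟨f, fun i => hf i trivial, hfp, hsib⟩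

theorem closure_of_invariant_web_general (d : ℕ) (W : Set (S1 × S1))
    (hW : IsInvWeb d W) : IsInvWeb d (closure W) := by
  obtain ⟨hsib, hdeg, himage, hpreimage⟩ := hW
  refine ⟨hasSiblings_closure hsib, fun x => subset_closure (hdeg x), fun p hp => ?_,
    fun p hp => ?_⟩
  · exact map_mem_closure (f := fun q : S1 × S1 => (sig d q.1, sig d q.2)) (by fun_prop) hp
      himage
  · exact exists_mem_closure_of_forall_exists
      (isClosed_pair_eq (f := fun qp : (S1 × S1) × (S1 × S1) => sig d qp.1.1)
        (g := fun qp => sig d qp.1.2) (h := fun qp => qp.2.1) (k := fun qp => qp.2.2)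
        (by fun_prop) (by fun_prop) (by fun_prop) (by fun_prop)) hpreimage hp

/-- The closure (in the space of chords, i.e. in `S1 × S1`) of a σ_d-invariant
web is again a σ_d-invariant web. -/
theorem closure_of_invariant_web (d : ℕ) (hd : 2 ≤ d) (W : Set (S1 × S1))
    (hW : IsInvWeb d W) : IsInvWeb d (closure W) :=
  closure_of_invariant_web_general d W hW
end
end

section
/- Let d ≥ 3 and suppose a, b are distinct fixed points of σ_d such that a is a vertex of a portal C_a and b is a vertex of a different portal C_b, where C_a, C_b belong to a family P⁺ of pairwise disjoint all-critical convex polygons whose complement in the disk has exactly d components. Then at least one complementary component of ⋃P⁺ contains at least two fixed points of σ_d in its closure. (Counting argument: σ_d has exactly d−1 fixed points; a and b each lie in the closures of exactly two components, so the remaining d−3 fixed points are distributed among the remaining d−4 components, forcing a component with two fixed points.) -/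
noncomputable section

def circleMap1 : ℝ → ℂ := fun x => Complex.exp (2 * Real.pi * Complex.I * (x : ℂ))

theorem circleMap1_periodic : Function.Periodic circleMap1 1 := by
  intro x
  unfold circleMap1
  push_cast
  rw [mul_add, Complex.exp_add, mul_one, Complex.exp_two_pi_mul_I, mul_one]

/-- The standard embedding of the circle `ℝ/ℤ` into the plane (unit circle in `ℂ`). -/
def toC : S1 → ℂ := circleMap1_periodic.lift

/-- The chord with endpoints `p.1, p.2`, realized as a straight segment in the closed disk. -/
def chordSeg (p : S1 × S1) : Set ℂ := segment ℝ (toC p.1) (toC p.2)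

/-!
The map `σ_d` fixes the `d - 1` points `k / (d - 1)`. Every point of the circle lies in the
closure of some complementary component. A vertex `u` of a polygon of `P⁺` lies in the closures
of two different components: the chord from `u` to another vertex `u'` of the same polygon is
contained in the polygon, so the real function measuring on which side of the line `u u'` a
point lies does not vanish on the complement, and near `u` the circle leaves that line on both
sides. If no component had two fixed points in its closure, the sets of components adjacent to
distinct fixed points would be disjoint, so there would be at least `(d - 1) + 2 > d` components.
-/

open Set Filter Topology Metric Complex ComplexConjugate

lemma toC_eq_toCircle (x : S1) : toC x = AddCircle.toCircle x := by
  induction x using QuotientAddGroup.induction_on with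
  | H x =>
    rw [AddCircle.toCircle_apply_mk, Circle.coe_exp]
    exact (circleMap1_periodic.lift_coe x).trans (by unfold circleMap1; push_cast; ring_nf)

lemma norm_toC (x : S1) : ‖toC x‖ = 1 := by
  rw [toC_eq_toCircle, Circle.norm_coe]

lemma toC_injective : Function.Injective toC := fun x y h => by
  rw [toC_eq_toCircle, toC_eq_toCircle] at h
  exact AddCircle.injective_toCircle one_ne_zero (Circle.coe_injective h)

def sigFixedPoints (d : ℕ) : Finset S1 :=
  (Finset.range (d - 1)).image fun k : ℕ => (((k : ℝ) / (d - 1 : ℕ) : ℝ) : S1)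

lemma card_sigFixedPoints (d : ℕ) : (sigFixedPoints d).card = d - 1 := by
  rw [sigFixedPoints, Finset.card_image_of_injOn, Finset.card_range]
  intro k hk l hl hkl
  simp only [Finset.coe_range, Set.mem_Iio] at hk hl
  have hpos : (0 : ℝ) < (d - 1 : ℕ) := by exact_mod_cast hk.trans_le' k.zero_le
  have hIco : ∀ m : ℕ, m < d - 1 → (m / (d - 1 : ℕ) : ℝ) ∈ Ico 0 (0 + 1) := fun m hm =>
    ⟨by positivity, by rw [zero_add, div_lt_one hpos]; exact_mod_cast hm⟩
  have := (AddCircle.coe_eq_coe_iff_of_mem_Ico (hIco k hk) (hIco l hl)).mp hkl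
  rw [div_left_inj' hpos.ne'] at this
  exact_mod_cast this

lemma sig_eq_self_of_mem_sigFixedPoints {d : ℕ} {x : S1} (hx : x ∈ sigFixedPoints d) :
    sig d x = x := by
  obtain ⟨k, hk, rfl⟩ := Finset.mem_image.mp hx
  rw [Finset.mem_range] at hk
  obtain ⟨n, rfl⟩ : ∃ n, d = n + 1 := ⟨d - 1, by omega⟩
  have hn : (n : ℝ) ≠ 0 := by
    rw [Nat.add_sub_cancel] at hk
    exact_mod_cast (hk.trans_le' k.zero_le).ne'
  have key : ((n + 1 : ℕ) : ℝ) * (k / n) = k / n + k • (1 : ℝ) := by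
    field_simp; push_cast; ring
  rw [sig, Nat.add_sub_cancel, ← AddCircle.coe_nsmul, nsmul_eq_mul, key, AddCircle.coe_add,
    AddCircle.coe_nsmul, AddCircle.coe_period, smul_zero, add_zero]

lemma exists_finset_sig_fixed {d : ℕ} {a b : S1} (ha : sig d a = a) (hb : sig d b = b) :
    ∃ F : Finset S1, a ∈ F ∧ b ∈ F ∧ d - 1 ≤ F.card ∧ ∀ x ∈ F, sig d x = x := by
  classical
  refine ⟨insert a (insert b (sigFixedPoints d)), Finset.mem_insert_self a _,
    Finset.mem_insert_of_mem (Finset.mem_insert_self b _), ?_, ?_⟩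
  · rw [← card_sigFixedPoints d]
    exact Finset.card_le_card ((Finset.subset_insert b _).trans (Finset.subset_insert a _))
  · simp only [Finset.mem_insert]
    rintro x (rfl | rfl | hx)
    exacts [ha, hb, sig_eq_self_of_mem_sigFixedPoints hx]

lemma exists_rel_ne_of_card_lt {α κ : Type*} [Finite κ] (R : α → κ → Prop) {F : Finset α}
    {a b : α} (ha : a ∈ F) (hb : b ∈ F) (hab : a ≠ b) (hR : ∀ x ∈ F, ∃ c, R x c)
    (hRa : ∃ c c', c ≠ c' ∧ R a c ∧ R a c') (hRb : ∃ c c', c ≠ c' ∧ R b c ∧ R b c')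
    (hcard : Nat.card κ < F.card + 2) :
    ∃ c, ∃ x ∈ F, ∃ y ∈ F, x ≠ y ∧ R x c ∧ R y c := by
  classical
  have := Fintype.ofFinite κ
  by_contra! hexcl
  let m : α → Finset κ := fun x => Finset.univ.filter (R x)
  have hdisj : (F : Set α).PairwiseDisjoint m := fun x hx y hy hxy =>
    Finset.disjoint_left.mpr fun c hcx hcy =>
      hexcl c x hx y hy hxy (Finset.mem_filter.mp hcx).2 (Finset.mem_filter.mp hcy).2
  have htwo : ∀ x, (∃ c c', c ≠ c' ∧ R x c ∧ R x c') → 2 ≤ (m x).card := by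
    rintro x ⟨c, c', hcc', hc, hc'⟩
    exact Finset.one_lt_card.mpr ⟨c, by simpa [m], c', by simpa [m], hcc'⟩
  have hb' : b ∈ F.erase a := Finset.mem_erase.mpr ⟨hab.symm, hb⟩
  have hrest : ((F.erase a).erase b).card ≤ ∑ x ∈ (F.erase a).erase b, (m x).card := by
    simpa using Finset.card_nsmul_le_sum _ (fun x => (m x).card) 1 fun x hx => by
      obtain ⟨c, hc⟩ := hR x (Finset.mem_of_mem_erase (Finset.mem_of_mem_erase hx))
      exact Finset.card_pos.mpr ⟨c, by simpa [m]⟩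
  have hsum : F.card + 2 ≤ ∑ x ∈ F, (m x).card := by
    rw [← Finset.add_sum_erase F _ ha, ← Finset.add_sum_erase _ _ hb']
    rw [Finset.card_erase_of_mem hb', Finset.card_erase_of_mem ha] at hrest
    have := Finset.one_lt_card.mpr ⟨a, ha, b, hb, hab⟩
    have := htwo a hRa
    have := htwo b hRb
    omega
  have := (Finset.card_biUnion hdisj).symm.trans_le (Finset.card_le_univ _)
  rw [← Nat.card_eq_fintype_card] at this
  omega

section Components

variable {X : Type*} [TopologicalSpace X] {U : Set X}

def componentSet (c : ConnectedComponents U) : Set X :=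
  (↑) '' (ConnectedComponents.mk ⁻¹' {c})

lemma componentSet_mk {z : X} (hz : z ∈ U) :
    componentSet (ConnectedComponents.mk (⟨z, hz⟩ : U)) = connectedComponentIn U z := by
  rw [componentSet, connectedComponents_preimage_singleton, connectedComponentIn_eq_image hz]

lemma componentSet_subset (c : ConnectedComponents U) : componentSet c ⊆ U := by
  rintro _ ⟨z, -, rfl⟩
  exact z.2

lemma isPreconnected_componentSet (c : ConnectedComponents U) :
    IsPreconnected (componentSet c) := by
  obtain ⟨z, rfl⟩ := ConnectedComponents.surjective_coe c
  rw [componentSet, connectedComponents_preimage_singleton]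
  exact isPreconnected_connectedComponent.image _ continuous_subtype_val.continuousOn

lemma iUnion_componentSet : ⋃ c : ConnectedComponents U, componentSet c = U := by
  refine (iUnion_subset componentSet_subset).antisymm fun z hz => ?_
  exact mem_iUnion.mpr ⟨_, ⟨z, hz⟩, rfl, rfl⟩

lemma exists_mem_closure_componentSet [Finite (ConnectedComponents U)] {T : Set X}
    (hT : T ⊆ U) {u : X} (hu : u ∈ closure T) :
    ∃ c : ConnectedComponents U, (T ∩ componentSet c).Nonempty ∧ u ∈ closure (componentSet c) := by
  have hcover : T = ⋃ c : ConnectedComponents U, T ∩ componentSet c := by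
    rw [← inter_iUnion, iUnion_componentSet, inter_eq_left.mpr hT]
  rw [hcover, closure_iUnion_of_finite] at hu
  obtain ⟨c, hc⟩ := mem_iUnion.mp hu
  exact ⟨c, closure_nonempty_iff.mp ⟨u, hc⟩, closure_mono inter_subset_right hc⟩

lemma ne_of_mem_componentSet_of_pos_of_neg {f : X → ℝ} (hf : ContinuousOn f U)
    (hf0 : ∀ z ∈ U, f z ≠ 0) {c c' : ConnectedComponents U} {x y : X}
    (hx : x ∈ componentSet c) (hy : y ∈ componentSet c') (hfx : 0 < f x) (hfy : f y < 0) :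
    c ≠ c' := by
  rintro rfl
  obtain ⟨w, hw, hfw⟩ := (isPreconnected_componentSet c).intermediate_value hy hx
    (hf.mono (componentSet_subset c)) ⟨hfy.le, hfx.le⟩
  exact hf0 w (componentSet_subset c hw) hfw

end Components

section NormedSpace

variable {E : Type*} [NormedAddCommGroup E] [NormedSpace ℝ E] {x : E} {r : ℝ}

lemma mem_of_mem_convexHull_of_mem_sphere [StrictConvexSpace ℝ E] (hr : r ≠ 0) {S : Set E}
    (hS : S ⊆ sphere x r) {z : E} (hz : z ∈ convexHull ℝ S) (hzr : z ∈ sphere x r) : z ∈ S :=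
  extremePoints_convexHull_subset (inter_extremePoints_subset_extremePoints_of_subset
    (convexHull_min (hS.trans sphere_subset_closedBall) (convex_closedBall x r))
    ⟨hz, StrictConvexSpace.sphere_subset_extremePoints_closedBall x hr hzr⟩)

lemma mem_closure_inter_ball_diff (hr : r ≠ 0) {K W : Set E} (hK : IsClosed K)
    (hKs : (K ∩ sphere x r).Finite) (hW : IsOpen W) {u : E} (huW : u ∉ W)
    (hu : u ∈ closure (W ∩ sphere x r)) : u ∈ closure (W ∩ (ball x r \ K)) := by
  have hsphere : (W ∩ sphere x r) \ K ⊆ closure (W ∩ (ball x r \ K)) := by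
    rintro z ⟨⟨hzW, hzs⟩, hzK⟩
    have hz : z ∈ (W ∩ Kᶜ) ∩ closure (ball x r) := by
      rw [closure_ball x hr]
      exact ⟨⟨hzW, hzK⟩, sphere_subset_closedBall hzs⟩
    refine closure_mono ?_ ((hW.inter hK.isOpen_compl).inter_closure hz)
    rintro w ⟨⟨hwW, hwK⟩, hwb⟩
    exact ⟨hwW, hwb, hwK⟩
  have hsplit : W ∩ sphere x r ⊆ ((W ∩ sphere x r) \ K) ∪ ((K ∩ sphere x r) \ {u}) := by
    rintro z ⟨hzW, hzs⟩
    by_cases hzK : z ∈ K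
    · exact Or.inr ⟨⟨hzK, hzs⟩, fun h => huW (h ▸ hzW)⟩
    · exact Or.inl ⟨⟨hzW, hzs⟩, hzK⟩
  have := closure_mono hsplit hu
  rw [closure_union, hKs.sdiff.isClosed.closure_eq] at this
  rcases this with h | h
  · exact closure_closure (s := W ∩ (ball x r \ K)) ▸ closure_mono hsphere h
  · exact absurd rfl h.2

end NormedSpace

/-- The cross product of `u' - u` and `z - u`: positive when `z` lies to the left of the line
from `u` to `u'`, negative to its right. -/
def lineSide (u u' z : ℂ) : ℝ := (conj (u' - u) * (z - u)).im

lemma continuous_lineSide (u u' : ℂ) : Continuous (lineSide u u') :=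
  Complex.continuous_im.comp (continuous_const.mul (continuous_id.sub continuous_const))

lemma lineSide_self_left (u u' : ℂ) : lineSide u u' u = 0 := by simp [lineSide]

lemma lineSide_mul_exp_mul_I (u u' : ℂ) (t : ℝ) :
    lineSide u u' (u * exp (t * I)) =
      (conj (u' - u) * u).re * Real.sin t + (conj (u' - u) * u).im * (Real.cos t - 1) := by
  rw [lineSide, show u * exp (t * I) - u = u * (exp (t * I) - 1) by ring, ← mul_assoc,
    Complex.exp_mul_I, ← Complex.ofReal_cos, ← Complex.ofReal_sin]
  simp only [Complex.mul_im, Complex.sub_re, Complex.sub_im, Complex.add_re, Complex.add_im,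
    Complex.mul_re, Complex.ofReal_re, Complex.ofReal_im, Complex.I_re, Complex.I_im,
    Complex.one_re, Complex.one_im]
  ring

lemma re_conj_sub_mul_self {u u' : ℂ} (hu : ‖u‖ = 1) (hu' : ‖u'‖ = 1) :
    (conj (u' - u) * u).re = -‖u' - u‖ ^ 2 / 2 := by
  have hsq (z : ℂ) : ‖z‖ ^ 2 = z.re ^ 2 + z.im ^ 2 := by
    rw [Complex.sq_norm, Complex.normSq_apply]; ring
  have hu2 := hsq u
  have hu2' := hsq u'
  rw [hu] at hu2
  rw [hu'] at hu2'
  rw [hsq]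
  simp only [map_sub, Complex.mul_re, Complex.sub_re, Complex.sub_im, Complex.conj_re,
    Complex.conj_im]
  linear_combination (-1/2 : ℝ) * hu2' + (1/2 : ℝ) * hu2

lemma eventually_sign_lineSide {u u' : ℂ} (hu : ‖u‖ = 1) (hu' : ‖u'‖ = 1) (hne : u ≠ u') :
    ∀ᶠ t : ℝ in 𝓝 0,
      SignType.sign (lineSide u u' (u * exp (t * I))) = SignType.sign (-t) := by
  set c := conj (u' - u) * u
  have hderiv : HasDerivAt (fun t : ℝ => lineSide u u' (u * exp (t * I))) c.re 0 := by
    rw [funext (lineSide_mul_exp_mul_I u u')]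
    have h := ((Real.hasDerivAt_sin 0).const_mul c.re).add
      (((Real.hasDerivAt_cos 0).sub_const 1).const_mul c.im)
    rwa [Real.cos_zero, Real.sin_zero, mul_one, neg_zero, mul_zero, add_zero] at h
  have hc : c.re < 0 := by
    rw [re_conj_sub_mul_self hu hu']
    have : 0 < ‖u' - u‖ := norm_pos_iff.mpr (sub_ne_zero.mpr hne.symm)
    nlinarith
  filter_upwards [eventually_nhdsWithin_sign_eq_of_deriv_neg (hderiv.deriv ▸ hc)
    (by simp [lineSide])] with t ht
  rwa [zero_sub] at ht

lemma mem_closure_lineSide_pos_neg {u u' : ℂ} (hu : ‖u‖ = 1) (hu' : ‖u'‖ = 1) (hne : u ≠ u') :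
    u ∈ closure ({z | 0 < lineSide u u' z} ∩ sphere 0 1) ∧
      u ∈ closure ({z | lineSide u u' z < 0} ∩ sphere 0 1) := by
  have hγ : Tendsto (fun t : ℝ => u * exp (t * I)) (𝓝 0) (𝓝 u) := by
    simpa using ((continuous_ofReal.mul continuous_const).cexp.const_mul u).tendsto (0 : ℝ)
  have hsphere (t : ℝ) : u * exp (t * I) ∈ sphere 0 1 := by
    simp [hu, Complex.norm_exp_ofReal_mul_I]
  have hsign := eventually_sign_lineSide hu hu' hne
  constructor
  · refine mem_closure_of_tendsto (hγ.mono_left (nhdsWithin_le_nhds (s := Iio 0))) ?_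
    filter_upwards [nhdsWithin_le_nhds hsign, self_mem_nhdsWithin] with t ht ht0
    rw [sign_pos (neg_pos.mpr ht0), sign_eq_one_iff] at ht
    exact ⟨ht, hsphere t⟩
  · refine mem_closure_of_tendsto (hγ.mono_left (nhdsWithin_le_nhds (s := Ioi 0))) ?_
    filter_upwards [nhdsWithin_le_nhds hsign, self_mem_nhdsWithin] with t ht ht0
    rw [sign_neg (neg_neg_of_pos ht0), sign_eq_neg_one_iff] at ht
    exact ⟨ht, hsphere t⟩

lemma exists_eq_add_smul_of_lineSide_eq_zero {u u' z : ℂ} (hne : u ≠ u')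
    (h0 : lineSide u u' z = 0) : ∃ t : ℝ, z = u + t • (u' - u) := by
  set w := u' - u
  have hw : w ≠ 0 := sub_ne_zero.mpr hne.symm
  have hw' : conj w ≠ 0 := (map_ne_zero _).mpr hw
  have hreal : conj w * (z - u) = ((conj w * (z - u)).re : ℂ) :=
    Complex.ext rfl (by rw [ofReal_im]; exact h0)
  refine ⟨(conj w * (z - u)).re / normSq w, ?_⟩
  rw [Complex.real_smul, Complex.ofReal_div, ← hreal, ← Complex.mul_conj]
  field_simp
  ring

lemma mem_Ioo_of_norm_add_smul_sub_lt_one {E : Type*} [NormedAddCommGroup E]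
    [InnerProductSpace ℝ E] {u u' : E} (hu : ‖u‖ = 1) (hu' : ‖u'‖ = 1) (hne : u ≠ u') {t : ℝ}
    (ht : ‖u + t • (u' - u)‖ < 1) : t ∈ Ioo 0 1 := by
  have hw : 0 < ‖u' - u‖ := norm_pos_iff.mpr (sub_ne_zero.mpr hne.symm)
  have hinner : 2 * inner ℝ u (u' - u) = -‖u' - u‖ ^ 2 := by
    have := norm_add_sq_real u (u' - u)
    rw [add_sub_cancel, hu, hu'] at this
    linarith
  have hsq : ‖u + t • (u' - u)‖ ^ 2 = 1 + (t ^ 2 - t) * ‖u' - u‖ ^ 2 := by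
    rw [norm_add_sq_real, inner_smul_right, norm_smul, mul_pow, Real.norm_eq_abs, sq_abs, hu]
    linear_combination t * hinner
  have hlt : t ^ 2 - t < 0 := by
    have : ‖u + t • (u' - u)‖ ^ 2 < 1 := by
      nlinarith [norm_nonneg (u + t • (u' - u))]
    nlinarith
  constructor <;> nlinarith

lemma mem_segment_of_lineSide_eq_zero {u u' z : ℂ} (hu : ‖u‖ = 1) (hu' : ‖u'‖ = 1)
    (hne : u ≠ u') (hz : ‖z‖ < 1) (h0 : lineSide u u' z = 0) : z ∈ segment ℝ u u' := by
  obtain ⟨t, rfl⟩ := exists_eq_add_smul_of_lineSide_eq_zero hne h0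
  obtain ⟨ht0, ht1⟩ := mem_Ioo_of_norm_add_smul_sub_lt_one hu hu' hne hz
  exact ⟨1 - t, t, by linarith, ht0.le, by ring, by module⟩

section Disk

variable {K : Set ℂ}

lemma mem_closure_lineSide_inter_ball_diff (hK : IsClosed K) (hKs : (K ∩ sphere 0 1).Finite)
    {u u' : ℂ} (hu : ‖u‖ = 1) (hu' : ‖u'‖ = 1) (hne : u ≠ u') :
    u ∈ closure ({z | 0 < lineSide u u' z} ∩ (ball 0 1 \ K)) ∧
      u ∈ closure ({z | lineSide u u' z < 0} ∩ (ball 0 1 \ K)) := by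
  obtain ⟨hpos, hneg⟩ := mem_closure_lineSide_pos_neg hu hu' hne
  have hcont := continuous_lineSide u u'
  exact ⟨mem_closure_inter_ball_diff one_ne_zero hK hKs (isOpen_lt continuous_const hcont)
      (by simp [lineSide_self_left]) hpos,
    mem_closure_inter_ball_diff one_ne_zero hK hKs (isOpen_lt hcont continuous_const)
      (by simp [lineSide_self_left]) hneg⟩

variable [Finite (ConnectedComponents ↥(ball (0 : ℂ) 1 \ K))]

lemma exists_mem_closure_componentSet_ball_diff (hK : IsClosed K)
    (hKs : (K ∩ sphere 0 1).Finite) {u : ℂ} (hu : ‖u‖ = 1) :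
    ∃ c : ConnectedComponents ↥(ball (0 : ℂ) 1 \ K), u ∈ closure (componentSet c) := by
  -- any chord from `u` would do
  have hne : u ≠ -u := fun h => by simp [CharZero.eq_neg_self_iff.mp h] at hu
  obtain ⟨c, -, hc⟩ := exists_mem_closure_componentSet inter_subset_right
    (mem_closure_lineSide_inter_ball_diff hK hKs hu (by rwa [norm_neg]) hne).1
  exact ⟨c, hc⟩

lemma exists_ne_mem_closure_componentSet_of_segment_subset (hK : IsClosed K)
    (hKs : (K ∩ sphere 0 1).Finite) {u u' : ℂ} (hu : ‖u‖ = 1) (hu' : ‖u'‖ = 1) (hne : u ≠ u')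
    (hseg : segment ℝ u u' ⊆ K) :
    ∃ c c' : ConnectedComponents ↥(ball (0 : ℂ) 1 \ K),
      c ≠ c' ∧ u ∈ closure (componentSet c) ∧ u ∈ closure (componentSet c') := by
  have hf0 : ∀ z ∈ ball 0 1 \ K, lineSide u u' z ≠ 0 := fun z hz h0 =>
    hz.2 (hseg (mem_segment_of_lineSide_eq_zero hu hu' hne (mem_ball_zero_iff.mp hz.1) h0))
  obtain ⟨hpos, hneg⟩ := mem_closure_lineSide_inter_ball_diff hK hKs hu hu' hne
  obtain ⟨c, ⟨x, hfx, hx⟩, hc⟩ := exists_mem_closure_componentSet inter_subset_right hpos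
  obtain ⟨c', ⟨y, hfy, hy⟩, hc'⟩ := exists_mem_closure_componentSet inter_subset_right hneg
  exact ⟨c, c', ne_of_mem_componentSet_of_pos_of_neg (continuous_lineSide u u').continuousOn
    hf0 hx hy hfx.1 hfy.1, hc, hc'⟩

end Disk

def polygonUnion (P : Finset (Finset S1)) : Set ℂ :=
  ⋃ A ∈ P, convexHull ℝ (toC '' (A : Set S1))

lemma isClosed_polygonUnion (P : Finset (Finset S1)) : IsClosed (polygonUnion P) :=
  P.finite_toSet.isClosed_biUnion fun A _ =>
    ((A.finite_toSet.image toC).isCompact_convexHull ℝ).isClosed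

lemma finite_polygonUnion_inter_sphere (P : Finset (Finset S1)) :
    (polygonUnion P ∩ sphere 0 1).Finite := by
  refine (P.finite_toSet.biUnion fun A _ => A.finite_toSet.image toC).subset ?_
  rintro z ⟨hz, hz1⟩
  obtain ⟨A, hA, hzA⟩ := mem_iUnion₂.mp hz
  refine mem_biUnion hA (mem_of_mem_convexHull_of_mem_sphere one_ne_zero ?_ hzA hz1)
  rintro _ ⟨x, -, rfl⟩
  exact mem_sphere_zero_iff_norm.mpr (norm_toC x)

lemma segment_subset_polygonUnion {P : Finset (Finset S1)} {A : Finset S1} (hA : A ∈ P)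
    {x y : S1} (hx : x ∈ A) (hy : y ∈ A) : segment ℝ (toC x) (toC y) ⊆ polygonUnion P :=
  (segment_subset_convexHull (mem_image_of_mem _ hx) (mem_image_of_mem _ hy)).trans
    fun _ hz => mem_iUnion₂.mpr ⟨A, hA, hz⟩

theorem component_with_two_fixed_points_general (d : ℕ) (hd : 3 ≤ d)
    (P : Finset (Finset S1)) (hP : ∀ A ∈ P, 2 ≤ A.card)
    (U : Set ℂ)
    (hU : U = Metric.ball (0 : ℂ) 1 \ ⋃ A ∈ P, convexHull ℝ (toC '' (A : Set S1)))
    (hcomp : Nat.card (ConnectedComponents ↥U) = d)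
    (a b : S1) (hab : a ≠ b) (ha : sig d a = a) (hb : sig d b = b)
    (A B : Finset S1) (hA : A ∈ P) (hB : B ∈ P)
    (haA : a ∈ A) (hbB : b ∈ B) :
    ∃ z ∈ U, ∃ p q : S1, p ≠ q ∧ sig d p = p ∧ sig d q = q ∧
      toC p ∈ closure (connectedComponentIn U z) ∧
      toC q ∈ closure (connectedComponentIn U z) := by
  obtain rfl : U = ball 0 1 \ polygonUnion P := hU
  have hK := isClosed_polygonUnion P
  have hKs := finite_polygonUnion_inter_sphere P
  have : Finite (ConnectedComponents ↥(ball (0 : ℂ) 1 \ polygonUnion P)) :=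
    Nat.finite_of_card_ne_zero (by omega)
  have hvertex {x : S1} {C : Finset S1} (hC : C ∈ P) (hx : x ∈ C) :
      ∃ c c' : ConnectedComponents ↥(ball (0 : ℂ) 1 \ polygonUnion P),
        c ≠ c' ∧ toC x ∈ closure (componentSet c) ∧ toC x ∈ closure (componentSet c') := by
    obtain ⟨x', hx'C, hx'⟩ := Finset.exists_mem_ne (hP C hC) x
    exact exists_ne_mem_closure_componentSet_of_segment_subset hK hKs (norm_toC x)
      (norm_toC x') (toC_injective.ne hx'.symm) (segment_subset_polygonUnion hC hx hx'C)
  obtain ⟨F, haF, hbF, hF, hfix⟩ := exists_finset_sig_fixed ha hb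
  obtain ⟨c, x, hx, y, hy, hxy, hxc, hyc⟩ :=
    exists_rel_ne_of_card_lt (fun x c => toC x ∈ closure (componentSet c)) haF hbF hab
      (fun x _ => exists_mem_closure_componentSet_ball_diff hK hKs (norm_toC x))
      (hvertex hA haA) (hvertex hB hbB) (by omega)
  obtain ⟨⟨z, hz⟩, rfl⟩ := ConnectedComponents.surjective_coe c
  rw [componentSet_mk hz] at hxc hyc
  exact ⟨z, hz, x, y, hxy, hfix x hx, hfix y hy, hxc, hyc⟩

/-- Let `d ≥ 3` and let `P⁺` be a family of pairwise disjoint all-critical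
convex polygons (each with at least two vertices, all vertices of a polygon having the same
σ_d-image) whose complement in the open unit disk has exactly `d` connected components.
If `a ≠ b` are fixed points of σ_d which are vertices of two distinct polygons of `P⁺`
(so these polygons are portals), then at least one complementary component has at least two
fixed points of σ_d in its closure. -/
theorem component_with_two_fixed_points (d : ℕ) (hd : 3 ≤ d)
    (P : Finset (Finset S1)) (hP : ∀ A ∈ P, 2 ≤ A.card)
    (hcrit : ∀ A ∈ P, ∀ x ∈ A, ∀ y ∈ A, sig d x = sig d y)
    (hdisj : ∀ A ∈ P, ∀ B ∈ P, A ≠ B →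
      Disjoint (convexHull ℝ (toC '' (A : Set S1))) (convexHull ℝ (toC '' (B : Set S1))))
    (U : Set ℂ)
    (hU : U = Metric.ball (0 : ℂ) 1 \ ⋃ A ∈ P, convexHull ℝ (toC '' (A : Set S1)))
    (hcomp : Nat.card (ConnectedComponents ↥U) = d)
    (a b : S1) (hab : a ≠ b) (ha : sig d a = a) (hb : sig d b = b)
    (A B : Finset S1) (hA : A ∈ P) (hB : B ∈ P) (hAB : A ≠ B)
    (haA : a ∈ A) (hbB : b ∈ B) :
    ∃ z ∈ U, ∃ p q : S1, p ≠ q ∧ sig d p = p ∧ sig d q = q ∧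
      toC p ∈ closure (connectedComponentIn U z) ∧
      toC q ∈ closure (connectedComponentIn U z) :=
  component_with_two_fixed_points_general d hd P hP U hU hcomp a b hab ha hb A B hA hB haA hbB
end
end
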